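/- arXiv:1001.1963 — 2 statements merged into one kernel-verified Lean document; each statement's English description precedes it below -/
import Mathlib

section
/- Let μ be a full infinitely divisible measure on V that is universally centered with respect to its symmetry group (i.e., μ = Sμ for every symmetry S of μ). Then for any a > 0 and any A, B ∈ G_a(μ), writing μ^a = Aμ * δ(h_{a,A}) = Bμ * δ(h_{a,B}), we have Aμ = Bμ and h_{a,A} = h_{a,B}. -/
/-!
Since `|φ_{μ^a}| = |φ_μ|^a`, and a probability measure is concentrated on an affine hyperplane
`⟪·, u⟫ = c` exactly when its characteristic function has modulus one along `ℝ u`, the power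
`μ^a` is full together with `μ`. Hence `Aμ`, a translate of `μ^a`, is full, so `A` is invertible,
and `S = A⁻¹ B` is a symmetry: `μ = Sμ ∗ δ(A⁻¹(h_B - h_A))`. Universal centering gives `Sμ = μ`,
so `μ` is invariant under translation by `A⁻¹(h_B - h_A)`; a probability measure admits no
nonzero period, whence `h_A = h_B` and then `Aμ = Bμ`.
-/

open MeasureTheory
open scoped MeasureTheory RealInnerProductSpace

variable {V : Type*} [NormedAddCommGroup V] [InnerProductSpace ℝ V]
  [FiniteDimensional ℝ V] [MeasurableSpace V] [BorelSpace V]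

/-- The characteristic function of a measure `μ`. -/
noncomputable def charFun (μ : Measure V) (v : V) : ℂ :=
  ∫ u, Complex.exp (((⟪u, v⟫ : ℝ) : ℂ) * Complex.I) ∂μ

/-- `M` is a Lévy (spectral) measure on `V ∖ {0}`. -/
def IsLevyMeasure (M : Measure V) : Prop :=
  M {0} = 0 ∧ ∫⁻ v, ENNReal.ofReal (‖v‖ ^ 2 / (1 + ‖v‖ ^ 2)) ∂M ≠ ⊤

/-- `μ` is the infinitely divisible measure with Lévy–Khinchine triple `[m, D, M]`. -/
def IsIDTriple (μ : Measure V) (m : V) (D : V →ₗ[ℝ] V) (M : Measure V) : Prop :=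
  ∀ u : V, _root_.charFun μ u =
    Complex.exp (Complex.I * ((⟪m, u⟫ : ℝ) : ℂ) - ((⟪D u, u⟫ : ℝ) : ℂ) / 2 +
      ∫ v, (Complex.exp (Complex.I * ((⟪v, u⟫ : ℝ) : ℂ)) - 1 -
        Complex.I * ((⟪v, u⟫ : ℝ) : ℂ) / (1 + (‖v‖ : ℂ) ^ 2)) ∂M)

/-- `μ` is full: not concentrated on any proper affine hyperplane. -/
def IsFull (μ : Measure V) : Prop :=
  ∀ (W : Submodule ℝ V) (x : V), μ {v | v - x ∈ W} = 1 → W = ⊤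

/-- `S` is a symmetry of `μ`: `μ = Sμ ∗ δ(h)` for some `h`. -/
def IsSymmetry (μ : Measure V) (S : V →ₗ[ℝ] V) : Prop :=
  ∃ h : V, μ = (μ.map S) ∗ Measure.dirac h

/-- `μa` is the `a`-th convolution power `μ^a` of the infinitely divisible measure `μ`,
expressed via Lévy–Khinchine triples: if `μ = [m, D, M]` then `μ^a = [a•m, a•D, a•M]`. -/
def IsConvPow (μ μa : Measure V) (a : ℝ) : Prop :=
  ∃ (m : V) (D : V →ₗ[ℝ] V) (M : Measure V), IsLevyMeasure M ∧
    IsIDTriple μ m D M ∧ IsIDTriple μa (a • m) (a • D) (ENNReal.ofReal a • M)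

open Filter Topology ProbabilityTheory

namespace MeasureTheory

lemma Measure.conv_map_neg_eq_map_sub {G : Type*} [AddGroup G] [MeasurableSpace G]
    [MeasurableAdd₂ G] [MeasurableNeg G] (ν : Measure G) [SFinite ν] :
    ν ∗ ν.map Neg.neg = (ν.prod ν).map (fun p ↦ p.1 - p.2) := by
  rw [Measure.conv, ← Measure.map_id (μ := ν), Measure.map_prod_map _ _ measurable_id
    measurable_neg, Measure.map_map (by fun_prop) (by fun_prop), Measure.map_id]
  simp [Function.comp_def, sub_eq_add_neg]

lemma Measure.eq_of_conv_dirac_eq {G : Type*} [AddGroup G] [MeasurableSpace G]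
    [MeasurableAdd₂ G] {κ κ' : Measure G} [SFinite κ] [SFinite κ'] {y : G}
    (h : κ ∗ Measure.dirac y = κ' ∗ Measure.dirac y) : κ = κ' := by
  rw [Measure.conv_dirac, Measure.conv_dirac] at h
  exact (MeasurableEquiv.addRight y).map_measurableEquiv_injective h

variable {E : Type*} [NormedAddCommGroup E] [InnerProductSpace ℝ E] [MeasurableSpace E]
  [BorelSpace E]

lemma charFun_map_neg (ν : Measure E) (t : E) :
    charFun (ν.map Neg.neg) t = starRingEnd ℂ (charFun ν t) := by
  rw [← charFun_neg, ← neg_one_smul ℝ t, ← charFun_map_smul]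
  simp

lemma charFun_map_inner (κ : Measure E) (u : E) (t : ℝ) :
    charFun (κ.map (⟪·, u⟫)) t = charFun κ (t • u) := by
  rw [charFun_apply, charFun_apply, integral_map (by fun_prop) (by fun_prop)]
  simp [real_inner_smul_right, mul_comm]

/-- If `‖charFun ν‖ = 1`, the symmetrization `ν ∗ ν.map Neg.neg` has characteristic function
`‖charFun ν‖ ^ 2 = 1`, so it is `dirac 0`, i.e. `x = y` for `ν ⊗ ν`-almost every `(x, y)`. -/
lemma norm_charFun_eq_one_iff_ae_eq [CompleteSpace E] [SecondCountableTopology E]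
    {ν : Measure E} [IsProbabilityMeasure ν] :
    (∀ t, ‖charFun ν t‖ = 1) ↔ ∃ c, ∀ᵐ x ∂ν, x = c := by
  constructor
  · intro h
    have hsymm : (ν.prod ν).map (fun p ↦ p.1 - p.2) = Measure.dirac 0 := by
      rw [← Measure.conv_map_neg_eq_map_sub]
      refine Measure.ext_of_charFun (funext fun t ↦ ?_)
      rw [charFun_conv, charFun_map_neg, Complex.mul_conj', h t, charFun_dirac]
      simp
    have hdiag : ∀ᵐ p ∂ν.prod ν, p.1 - p.2 = 0 := by
      refine ae_of_ae_map (μ := ν.prod ν) (f := fun p ↦ p.1 - p.2) (p := (· = 0))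
        (by fun_prop) ?_
      rw [hsymm, ae_dirac_eq]
      exact Filter.eventually_pure.2 rfl
    obtain ⟨c, hc⟩ := (Measure.ae_ae_of_ae_prod hdiag).exists
    exact ⟨c, hc.mono fun x hx ↦ (sub_eq_zero.1 hx).symm⟩
  · rintro ⟨c, hc⟩ t
    rw [charFun_apply, integral_congr_ae (g := fun _ ↦ Complex.exp (⟪c, t⟫ * Complex.I))
      (hc.mono fun x hx ↦ by rw [hx])]
    simp [Complex.norm_exp_ofReal_mul_I]

lemma cdf_periodic_of_map_add_eq_self {ν : Measure ℝ} [IsProbabilityMeasure ν] {c : ℝ}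
    (h : ν.map (· + c) = ν) : Function.Periodic (cdf ν) c := by
  intro x
  rw [cdf_eq_real, cdf_eq_real]
  conv_lhs => rw [← h]
  rw [map_measureReal_apply (by fun_prop) measurableSet_Iic]
  congr 1
  ext y
  simp

/-- A `c`-periodic function tending to `0` at `-∞` and to `1` at `+∞` must have `c = 0`. -/
lemma eq_zero_of_periodic_cdf {ν : Measure ℝ} [IsProbabilityMeasure ν] {c : ℝ}
    (h : Function.Periodic (cdf ν) c) : c = 0 := by
  by_contra hc
  obtain ⟨d, hd, hF⟩ : ∃ d > 0, Function.Periodic (cdf ν) d := by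
    rcases lt_or_gt_of_ne hc with hc | hc
    · exact ⟨-c, neg_pos.2 hc, h.neg⟩
    · exact ⟨c, hc, h⟩
  have hmul : Tendsto (fun n : ℕ ↦ n * d) atTop atTop :=
    tendsto_natCast_atTop_atTop.atTop_mul_const hd
  have htop : Tendsto (fun n : ℕ ↦ cdf ν (n * d)) atTop (𝓝 1) :=
    (tendsto_cdf_atTop ν).comp hmul
  have hbot : Tendsto (fun n : ℕ ↦ cdf ν (0 - n * d)) atTop (𝓝 0) :=
    (tendsto_cdf_atBot ν).comp
      (tendsto_atBot_add_const_left _ 0 (tendsto_neg_atTop_atBot.comp hmul))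
  simp only [hF.nat_mul_eq, hF.sub_nat_mul_eq, tendsto_const_nhds_iff] at htop hbot
  exact one_ne_zero (htop.symm.trans hbot)

lemma eq_zero_of_map_add_eq_self {κ : Measure E} [IsProbabilityMeasure κ] {h : E}
    (hκ : κ.map (· + h) = κ) : h = 0 := by
  have hproj : (κ.map (⟪·, h⟫)).map (· + ⟪h, h⟫) = κ.map (⟪·, h⟫) :=
    calc (κ.map (⟪·, h⟫)).map (· + ⟪h, h⟫) = (κ.map (· + h)).map (⟪·, h⟫) := by
          rw [Measure.map_map (by fun_prop) (by fun_prop),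
            Measure.map_map (by fun_prop) (by fun_prop)]
          simp [Function.comp_def, inner_add_left]
      _ = κ.map (⟪·, h⟫) := by rw [hκ]
  have : IsProbabilityMeasure (κ.map (⟪·, h⟫)) := Measure.isProbabilityMeasure_map (by fun_prop)
  exact inner_self_eq_zero.1 (eq_zero_of_periodic_cdf (cdf_periodic_of_map_add_eq_self hproj))

end MeasureTheory

lemma measurableSet_sub_mem (W : Submodule ℝ V) (x : V) : MeasurableSet {v : V | v - x ∈ W} :=
  (W.closed_of_finiteDimensional.preimage (continuous_id.sub continuous_const)).measurableSet

lemma ae_sub_mem_iff {κ : Measure V} [IsProbabilityMeasure κ] (W : Submodule ℝ V) (x : V) :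
    (∀ᵐ v ∂κ, v - x ∈ W) ↔ κ {v | v - x ∈ W} = 1 :=
  ae_iff.trans (prob_compl_eq_zero_iff (measurableSet_sub_mem W x))

lemma not_isFull_iff_exists_ae_inner_eq {κ : Measure V} [IsProbabilityMeasure κ] :
    ¬ IsFull κ ↔ ∃ u ≠ 0, ∃ c : ℝ, ∀ᵐ v ∂κ, ⟪v, u⟫ = c := by
  simp only [IsFull, not_forall, exists_prop, ← ae_sub_mem_iff]
  constructor
  · rintro ⟨W, x, hW, hne⟩
    obtain ⟨u, hu, hu0⟩ := Submodule.exists_mem_ne_zero_of_ne_bot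
      (mt Submodule.orthogonal_eq_bot_iff.1 hne)
    refine ⟨u, hu0, ⟪x, u⟫, hW.mono fun v hv ↦ ?_⟩
    rw [← sub_eq_zero, ← inner_sub_left]
    exact Submodule.inner_right_of_mem_orthogonal hv hu
  · rintro ⟨u, hu0, c, hc⟩
    refine ⟨(ℝ ∙ u)ᗮ, (c / ⟪u, u⟫) • u, hc.mono fun v hv ↦ ?_, ?_⟩
    · rw [Submodule.mem_orthogonal_singleton_iff_inner_right, inner_sub_right,
        real_inner_smul_right, real_inner_comm, hv,
        div_mul_cancel₀ _ (inner_self_ne_zero.2 hu0), sub_self]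
    · simpa [Submodule.orthogonal_eq_top_iff] using hu0

lemma not_isFull_iff_exists_norm_charFun_eq_one {κ : Measure V} [IsProbabilityMeasure κ] :
    ¬ IsFull κ ↔ ∃ u ≠ 0, ∀ t : ℝ, ‖MeasureTheory.charFun κ (t • u)‖ = 1 := by
  rw [not_isFull_iff_exists_ae_inner_eq]
  refine exists_congr fun u ↦ and_congr_right fun _ ↦ ?_
  have : IsProbabilityMeasure (κ.map (⟪·, u⟫)) := Measure.isProbabilityMeasure_map (by fun_prop)
  simp_rw [← charFun_map_inner, norm_charFun_eq_one_iff_ae_eq]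
  exact exists_congr fun c ↦ (ae_map_iff (by fun_prop) measurableSet_eq).symm

lemma IsFull.of_conv_dirac {κ : Measure V} [SFinite κ] {y : V}
    (h : IsFull (κ ∗ Measure.dirac y)) : IsFull κ := by
  intro W x hW
  refine h W (x + y) ?_
  rw [Measure.conv_dirac, Measure.map_apply (by fun_prop) (measurableSet_sub_mem W _)]
  simpa using hW

lemma IsFull.surjective_of_map {μ : Measure V} [IsProbabilityMeasure μ] {A : V →ₗ[ℝ] V}
    (h : IsFull (μ.map A)) : Function.Surjective A := by
  refine LinearMap.range_eq_top.1 (h _ 0 ?_)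
  rw [Measure.map_apply A.continuous_of_finiteDimensional.measurable
    (measurableSet_sub_mem _ _)]
  simp

lemma IsConvPow.norm_charFun {E : Type*} [NormedAddCommGroup E] [InnerProductSpace ℝ E]
    [MeasurableSpace E] {μ μa : Measure E} {a : ℝ} (hpow : IsConvPow μ μa a) (ha : 0 ≤ a)
    (u : E) : ‖MeasureTheory.charFun μa u‖ = ‖MeasureTheory.charFun μ u‖ ^ a := by
  obtain ⟨m, D, M, -, hμ, hμa⟩ := hpow
  -- the `charFun` of the definitions is definitionally Mathlib's `MeasureTheory.charFun`
  change ‖_root_.charFun μa u‖ = ‖_root_.charFun μ u‖ ^ a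
  rw [hμa u, hμ u, Complex.norm_exp, Complex.norm_exp, ← Real.exp_mul]
  congr 1
  rw [integral_smul_measure, ENNReal.toReal_ofReal ha, real_inner_smul_left,
    LinearMap.smul_apply, real_inner_smul_left]
  simp [Complex.real_smul]
  ring

lemma IsConvPow.isFull {μ μa : Measure V} [IsProbabilityMeasure μ] [IsProbabilityMeasure μa]
    {a : ℝ} (hpow : IsConvPow μ μa a) (ha : 0 < a) (hfull : IsFull μ) : IsFull μa := by
  by_contra hnot
  obtain ⟨u, hu, hμa⟩ := not_isFull_iff_exists_norm_charFun_eq_one.1 hnot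
  refine not_isFull_iff_exists_norm_charFun_eq_one.2 ⟨u, hu, fun t ↦ ?_⟩ hfull
  rw [← Real.rpow_left_inj (norm_nonneg _) zero_le_one ha.ne', Real.one_rpow,
    ← hpow.norm_charFun ha.le, hμa t]

lemma eq_map_symm_comp_conv_dirac {μ : Measure V} [SFinite μ] (e : V ≃ₗ[ℝ] V)
    (B : V →ₗ[ℝ] V) {hA hB : V}
    (h : (μ.map e) ∗ Measure.dirac hA = (μ.map B) ∗ Measure.dirac hB) :
    μ = (μ.map (e.symm.toLinearMap ∘ₗ B)) ∗ Measure.dirac (e.symm (hB - hA)) := by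
  have he : Measurable e := e.toLinearMap.continuous_of_finiteDimensional.measurable
  have he_symm : Measurable e.symm := e.symm.toLinearMap.continuous_of_finiteDimensional.measurable
  have hBm : Measurable B := B.continuous_of_finiteDimensional.measurable
  have := congrArg (Measure.map fun v ↦ e.symm (v - hA)) h
  rw [Measure.conv_dirac, Measure.conv_dirac, Measure.map_map (by fun_prop) he,
    Measure.map_map (by fun_prop) hBm, Measure.map_map (by fun_prop) (by fun_prop),
    Measure.map_map (by fun_prop) (by fun_prop)] at this
  rw [Measure.conv_dirac, Measure.map_map (by fun_prop) (by fun_prop)]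
  convert this using 2
  · simp [Function.comp_def]
  · funext v
    simp [map_sub, add_sub_assoc]

/-- **Lemma 6.** If the full infinitely divisible `μ` is universally centered with respect
to its symmetry group, then for `A, B ∈ G_a(μ)` with `μ^a = Aμ ∗ δ(h_A) = Bμ ∗ δ(h_B)`
we have `Aμ = Bμ` and `h_A = h_B`. -/
theorem map_eq_and_shift_eq_of_mem_Ga
    (μ μa : Measure V) [IsProbabilityMeasure μ] [IsProbabilityMeasure μa]
    (a : ℝ) (ha : 0 < a) (hfull : IsFull μ) (hpow : IsConvPow μ μa a)
    (hcent : ∀ S : V →ₗ[ℝ] V, IsSymmetry μ S → μ.map S = μ)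
    (A B : V →ₗ[ℝ] V) (hA hB : V)
    (hAeq : μa = (μ.map A) ∗ Measure.dirac hA)
    (hBeq : μa = (μ.map B) ∗ Measure.dirac hB) :
    μ.map A = μ.map B ∧ hA = hB := by
  have hsurj : Function.Surjective A :=
    (hAeq ▸ hpow.isFull ha hfull).of_conv_dirac.surjective_of_map
  set e := LinearEquiv.ofBijective A ⟨LinearMap.injective_iff_surjective.2 hsurj, hsurj⟩
  have hsym := eq_map_symm_comp_conv_dirac (μ := μ) e B (hAeq.symm.trans hBeq)
  rw [hcent _ ⟨_, hsym⟩, Measure.conv_dirac] at hsym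
  have hshift : hB - hA = 0 := e.symm.map_eq_zero_iff.1 (eq_zero_of_map_add_eq_self hsym.symm)
  obtain rfl : hA = hB := (sub_eq_zero.1 hshift).symm
  exact ⟨Measure.eq_of_conv_dirac_eq (hAeq.symm.trans hBeq), rfl⟩
end

section
/- Let μ be a full infinitely divisible measure on V, universally centered with respect to its symmetry group, with μ^c = Aμ * δ(h_c) for some 0 < c < 1 and all A ∈ G_c(μ). Suppose for some positive integer n there exists ĥ₀ ∈ V with h_{c^n} = Aⁿ ĥ₀ − cⁿ ĥ₀, where h_{c^n} = p_n(c, A) h_c and p_n(c, A) = c^{n−1}I + c^{n−2}A + ⋯ + A^{n−1}. Then h_c is orthogonal to N(A* − cI), i.e., there exists ĥ ∈ V with h_c = Aĥ − cĥ. -/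
open MeasureTheory
open scoped MeasureTheory RealInnerProductSpace

variable {V : Type*} [NormedAddCommGroup V] [InnerProductSpace ℝ V]
  [FiniteDimensional ℝ V] [MeasurableSpace V] [BorelSpace V]

/-! Since `V = N(T*) ⊕ T(V)` for `T = A - c`, it suffices that `h_c ⊥ N(A* - c)`. On a vector
`v ∈ N(A* - c)` every `(Aᵏ)*` acts as `cᵏ`, so pairing the centering identity with `v` gives
`n c^(n-1) ⟪h_c, v⟫ = ⟪Aⁿ h₀ - cⁿ h₀, v⟫ = 0`. -/

open LinearMap Module.End

lemma Module.End.pow_apply_of_apply_eq_smul {R M : Type*} [CommSemiring R] [AddCommMonoid M]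
    [Module R M] {f : Module.End R M} {c : R} {v : M} (hv : f v = c • v) (k : ℕ) :
    (f ^ k) v = c ^ k • v := by
  induction k with
  | zero => simp
  | succ k ih => rw [pow_succ', mul_apply, ih, map_smul, hv, smul_smul, pow_succ]

section

variable {E : Type*} [NormedAddCommGroup E] [InnerProductSpace ℝ E] [FiniteDimensional ℝ E]

lemma LinearMap.adjoint_pow (A : E →ₗ[ℝ] E) (k : ℕ) : adjoint (A ^ k) = adjoint A ^ k := by
  simp only [← LinearMap.star_eq_adjoint, star_pow]

lemma LinearMap.range_sub_algebraMap_eq_orthogonal_eigenspace_adjoint (A : E →ₗ[ℝ] E) (c : ℝ) :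
    range (A - algebraMap ℝ (Module.End ℝ E) c) = (eigenspace (adjoint A) c)ᗮ := by
  rw [← Submodule.orthogonal_orthogonal (range _), orthogonal_range, eigenspace_def]
  simp only [Algebra.algebraMap_eq_smul_one, map_sub, map_smul, IsSymmetric.one,
    IsSymmetric.adjoint_eq]

variable {A : E →ₗ[ℝ] E} {c : ℝ} {v : E}

lemma inner_pow_apply_of_adjoint_apply_eq_smul (hv : adjoint A v = c • v) (k : ℕ) (x : E) :
    ⟪(A ^ k) x, v⟫ = c ^ k * ⟪x, v⟫ := by
  rw [← adjoint_inner_right, adjoint_pow, pow_apply_of_apply_eq_smul hv, real_inner_smul_right]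

lemma inner_geom_sum_apply_of_adjoint_apply_eq_smul (hv : adjoint A v = c • v) (n : ℕ)
    (x : E) :
    ⟪(∑ k ∈ Finset.range n, c ^ (n - 1 - k) • A ^ k) x, v⟫ = n * c ^ (n - 1) * ⟪x, v⟫ := by
  have hterm : ∀ k ∈ Finset.range n,
      ⟪(c ^ (n - 1 - k) • A ^ k) x, v⟫ = c ^ (n - 1) * ⟪x, v⟫ := by
    intro k hk
    rw [LinearMap.smul_apply, real_inner_smul_left, inner_pow_apply_of_adjoint_apply_eq_smul hv,
      ← mul_assoc, ← pow_add, Nat.sub_add_cancel (by grind)]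
  rw [LinearMap.sum_apply, sum_inner, Finset.sum_congr rfl hterm, Finset.sum_const,
    Finset.card_range, nsmul_eq_mul, mul_assoc]

lemma inner_pow_apply_sub_smul_of_adjoint_apply_eq_smul (hv : adjoint A v = c • v) (n : ℕ)
    (y : E) : ⟪(A ^ n) y - c ^ n • y, v⟫ = 0 := by
  rw [inner_sub_left, inner_pow_apply_of_adjoint_apply_eq_smul hv, real_inner_smul_left,
    sub_self]

end

theorem discrete_centering_propagates_general
    (c : ℝ) (hc0 : 0 < c)
    (h_c : V)
    (A : V →ₗ[ℝ] V)
    (n : ℕ) (hn : 1 ≤ n)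
    (hcenter : ∃ h₀ : V,
      (∑ k ∈ Finset.range n, c ^ (n - 1 - k) • A ^ k) h_c = (A ^ n) h₀ - c ^ n • h₀) :
    ∃ hhat : V, h_c = A hhat - c • hhat := by
  obtain ⟨h₀, hh₀⟩ := hcenter
  have hperp : h_c ∈ (eigenspace (adjoint A) c)ᗮ := by
    refine (Submodule.mem_orthogonal' _ _).mpr fun v hv ↦ ?_
    have hv : adjoint A v = c • v := mem_eigenspace_iff.mp hv
    have hnc : (n : ℝ) * c ^ (n - 1) ≠ 0 := by positivity
    have hpair := inner_geom_sum_apply_of_adjoint_apply_eq_smul hv n h_c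
    rw [hh₀, inner_pow_apply_sub_smul_of_adjoint_apply_eq_smul hv] at hpair
    exact (mul_eq_zero.mp hpair.symm).resolve_left hnc
  rw [← range_sub_algebraMap_eq_orthogonal_eigenspace_adjoint] at hperp
  obtain ⟨hhat, rfl⟩ := hperp
  exact ⟨hhat, by simp [Algebra.algebraMap_eq_smul_one]⟩

/-- **Proposition 10 (key implication, discrete case).** Let `μ` be full, infinitely
divisible, universally centered, with `μ^c = Aμ ∗ δ(h_c)` for all `A ∈ G_c(μ)`,
`0 < c < 1`. If for some `n ≥ 1` the vector `h_{cⁿ} = pₙ(c, A) h_c`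
(`pₙ(c,A) = c^{n−1}I + c^{n−2}A + ⋯ + A^{n−1}`) can be centered, i.e.
`h_{cⁿ} = Aⁿ h₀ − cⁿ h₀` for some `h₀`, then `h_c = A ĥ − c ĥ` for some `ĥ`. -/
theorem discrete_centering_propagates
    (μ μc : Measure V) [IsProbabilityMeasure μ] [IsProbabilityMeasure μc]
    (c : ℝ) (hc0 : 0 < c) (hc1 : c < 1) (hfull : IsFull μ) (hpow : IsConvPow μ μc c)
    (hcent : ∀ S : V →ₗ[ℝ] V, IsSymmetry μ S → μ.map S = μ)
    (h_c : V)
    (hGc : ∀ A : V →ₗ[ℝ] V, (∃ h : V, μc = (μ.map A) ∗ Measure.dirac h) →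
      μc = (μ.map A) ∗ Measure.dirac h_c)
    (A : V →ₗ[ℝ] V) (hA : μc = (μ.map A) ∗ Measure.dirac h_c)
    (n : ℕ) (hn : 1 ≤ n)
    (hcenter : ∃ h₀ : V,
      (∑ k ∈ Finset.range n, c ^ (n - 1 - k) • A ^ k) h_c = (A ^ n) h₀ - c ^ n • h₀) :
    ∃ hhat : V, h_c = A hhat - c • hhat :=
  discrete_centering_propagates_general c hc0 h_c A n hn hcenter
end
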